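/- Let λ ∈ 𝔽_q^*, m a positive integer with gcd(m, g) = 1 and g ≡ 1 (mod ord(λ)), and suppose h(x) ∈ 𝔽_q[x] is coprime to x^m − λ. If Q(x) ∈ 𝔽_q[x] has degree less than m and Q(x^g)·h(x) ≡ 0 (mod x^m − λ), then Q(x) = 0. -/

import Mathlib

/-!
Substituting `X ↦ X^n` preserves divisibility by `X^m - λ` whenever `λ^n = λ`. Modulo `X^m - λ`
we have `X^(m·ord λ) = 1`, so `Q(X^k) ≡ Q` for `k ≡ 1 (mod m·ord λ)`. As `g` is invertible modulo
`m·ord λ`, with inverse `g' ≡ 1 (mod ord λ)`, substituting `X ↦ X^g'` in `Q(X^g)` recovers `Q`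
modulo `X^m - λ`; so `X^m - λ ∣ Q`, and `deg Q < m` gives `Q = 0`.
-/

open Polynomial AdjoinRoot

theorem Nat.exists_mul_modEq_one {g n : ℕ} (h : g.Coprime n) : ∃ g', g * g' ≡ 1 [MOD n] := by
  rcases n.eq_zero_or_pos with rfl | hn
  · exact ⟨1, by rw [(Nat.coprime_zero_right g).mp h]⟩
  · obtain ⟨k, hk⟩ := Nat.exists_eq_add_one_of_ne_zero (Nat.totient_pos.mpr hn).ne'
    refine ⟨g ^ k, ?_⟩
    rw [← _root_.pow_succ', ← hk]
    exact Nat.ModEq.pow_totient h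

theorem pow_eq_self_of_modEq_one {M : Type*} [Monoid M] {x : M} {n k : ℕ} (hk : orderOf x ∣ k)
    (h : n ≡ 1 [MOD k]) : x ^ n = x := by
  rw [← pow_mod_orderOf, h.of_dvd hk, pow_mod_orderOf, pow_one]

section

variable {R : Type*} [CommRing R] {m : ℕ} {lam : R}

theorem AdjoinRoot.root_X_pow_sub_C_pow_eq_of : root (X ^ m - C lam) ^ m = of _ lam := by
  rw [← sub_eq_zero, ← eval₂_root (X ^ m - C lam), eval₂_sub, eval₂_C, eval₂_pow, eval₂_X]

theorem AdjoinRoot.root_X_pow_sub_C_pow_mul_orderOf :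
    root (X ^ m - C lam) ^ (m * orderOf lam) = 1 := by
  rw [pow_mul, root_X_pow_sub_C_pow_eq_of, ← map_pow, pow_orderOf_eq_one, map_one]

theorem X_pow_sub_C_dvd_comp_X_pow {n : ℕ} (hn : lam ^ n = lam) {P : R[X]}
    (hP : X ^ m - C lam ∣ P) : X ^ m - C lam ∣ P.comp (X ^ n) := by
  obtain ⟨S, rfl⟩ := hP
  have hdvd : X ^ m - C lam ∣ (X ^ m) ^ n - C lam ^ n := sub_dvd_pow_sub_pow _ _ n
  rw [← map_pow, hn, ← pow_mul, mul_comm, pow_mul] at hdvd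
  rw [mul_comp, sub_comp, X_pow_comp, C_comp]
  exact hdvd.mul_right _

theorem X_pow_sub_C_dvd_comp_X_pow_iff {k : ℕ} (hk : k ≡ 1 [MOD m * orderOf lam]) {Q : R[X]} :
    X ^ m - C lam ∣ Q.comp (X ^ k) ↔ X ^ m - C lam ∣ Q := by
  have hroot : root (X ^ m - C lam) ^ k = root (X ^ m - C lam) :=
    pow_eq_self_of_modEq_one (orderOf_dvd_of_pow_eq_one root_X_pow_sub_C_pow_mul_orderOf) hk
  rw [← mk_eq_zero, ← mk_eq_zero, ← aeval_eq, ← aeval_eq, aeval_comp, map_pow, aeval_X, hroot]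

theorem X_pow_sub_C_dvd_of_dvd_comp_X_pow {g : ℕ} (hmg : m.Coprime g)
    (hg : g ≡ 1 [MOD orderOf lam]) {Q : R[X]} (hQ : X ^ m - C lam ∣ Q.comp (X ^ g)) :
    X ^ m - C lam ∣ Q := by
  have hgM : g.Coprime (m * orderOf lam) :=
    hmg.symm.mul_right (by simpa [Nat.Coprime] using hg.gcd_eq)
  obtain ⟨g', hgg'⟩ := Nat.exists_mul_modEq_one hgM
  have hg' : g' ≡ 1 [MOD orderOf lam] := by
    simpa using (hg.mul_right g').symm.trans (hgg'.of_dvd (dvd_mul_left _ _))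
  rw [← X_pow_sub_C_dvd_comp_X_pow_iff hgg', pow_mul', ← X_pow_comp (p := X ^ g'), ← comp_assoc]
  exact X_pow_sub_C_dvd_comp_X_pow (pow_eq_self_of_modEq_one dvd_rfl hg') hQ

end

theorem stmt_5_general (F : Type*) [Field F] (m g : ℕ) (hm : 0 < m)
    (lam : F) (hmg : Nat.gcd m g = 1)
    (hcong : g ≡ 1 [MOD orderOf lam]) (h : F[X])
    (hcop : IsCoprime h (X ^ m - C lam))
    (Q : F[X]) (hdeg : Q.degree < m)
    (hdvd : (X ^ m - C lam : F[X]) ∣ Q.comp (X ^ g) * h) :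
    Q = 0 :=
  eq_zero_of_dvd_of_degree_lt
    (X_pow_sub_C_dvd_of_dvd_comp_X_pow hmg hcong (hcop.symm.dvd_of_dvd_mul_right hdvd))
    (by rwa [degree_X_pow_sub_C hm])

theorem stmt_5 (F : Type*) [Field F] [Fintype F] (m g : ℕ) (hm : 0 < m) (hg : 0 < g)
    (lam : F) (hlam : lam ≠ 0) (hmg : Nat.gcd m g = 1)
    (hcong : g ≡ 1 [MOD orderOf lam]) (h : F[X])
    (hcop : IsCoprime h (X ^ m - C lam))
    (Q : F[X]) (hdeg : Q.degree < m)
    (hdvd : (X ^ m - C lam : F[X]) ∣ Q.comp (X ^ g) * h) :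
    Q = 0 :=
  stmt_5_general F m g hm lam hmg hcong h hcop Q hdeg hdvd
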